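/- Suppose d = 3 and variable 3 duplicates variable 1, i.e., x_{i3} = x_{i1} for all i ∈ {1,…,n} (with 𝒳_3 = 𝒳_1). Then the global uniqueness Shapley value of variable 2 satisfies φ^{1:n}_2 = (1/3)·𝓗({2}) + (2/3)·𝓗({2}|{1}). -/

import Mathlib

open Finset

variable {n d : ℕ} {X : Fin d → Type} [∀ j, Fintype (X j)] [∀ j, DecidableEq (X j)]

/-- Number of subjects matching subject `t` on every variable in `u`. -/
def cohortN (x : Fin n → ∀ j, X j) (t : Fin n) (u : Finset (Fin d)) : ℕ :=
  (Finset.univ.filter fun i => ∀ j ∈ u, x i j = x t j).card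

/-- Value function `val_t(u) = -log₂(N_t(u)/n)`. -/
noncomputable def uVal (x : Fin n → ∀ j, X j) (t : Fin n) (u : Finset (Fin d)) : ℝ :=
  -Real.logb 2 ((cohortN x t u : ℝ) / n)

/-- Uniqueness Shapley value of variable `j` for subject `t`. -/
noncomputable def uShap (x : Fin n → ∀ j, X j) (t : Fin n) (j : Fin d) : ℝ :=
  (d : ℝ)⁻¹ * ∑ u ∈ ((Finset.univ : Finset (Fin d)).erase j).powerset,
    ((d - 1).choose u.card : ℝ)⁻¹ * (uVal x t (insert j u) - uVal x t u)

/-- Global uniqueness Shapley value. -/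
noncomputable def uShapGlobal (x : Fin n → ∀ j, X j) (j : Fin d) : ℝ :=
  (n : ℝ)⁻¹ * ∑ t, uShap x t j

/-- Marginal empirical probability of observing `z` on the variables in `u`. -/
noncomputable def margP (x : Fin n → ∀ j, X j) (u : Finset (Fin d))
    (z : ∀ j : u, X j.1) : ℝ :=
  ((Finset.univ.filter fun i : Fin n => ∀ j : u, x i j.1 = z j).card : ℝ) / n

/-- Empirical entropy of the variables in `u` (convention `0·log₂ 0 = 0` holds automatically). -/
noncomputable def emEnt (x : Fin n → ∀ j, X j) (u : Finset (Fin d)) : ℝ :=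
  -∑ z : (∀ j : u, X j.1), margP x u z * Real.logb 2 (margP x u z)

/-! Averaging `val_t(u)` over the subjects gives the empirical entropy `𝓗(u)`, so `φ^{1:n}_2`
is the Shapley combination of entropies. Variables 1 and 3 (indices `0` and `2`) determine each
other, so adding one of them to a coalition that contains the other changes no cohort:
`val({3}) = val({1,3}) = val({1})` and `val({2,3}) = val({1,2,3}) = val({1,2})`. The four
Shapley terms for variable 2 then collapse to `(1/3)·val({2}) + (2/3)·(val({1,2}) − val({1}))`. -/

section Cohort

omit [∀ j, Fintype (X j)]

variable (x : Fin n → ∀ j, X j) (t : Fin n)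

theorem cohortN_insert_of_determined {u : Finset (Fin d)} {k : Fin d}
    (hk : ∀ i, (∀ j ∈ u, x i j = x t j) → x i k = x t k) :
    cohortN x t (insert k u) = cohortN x t u := by
  unfold cohortN
  congr 1
  refine filter_congr fun i _ => ?_
  simp only [mem_insert, forall_eq_or_imp, and_iff_right_iff_imp]
  exact hk i

theorem uVal_insert_of_determined {u : Finset (Fin d)} {k : Fin d}
    (hk : ∀ i, (∀ j ∈ u, x i j = x t j) → x i k = x t k) :
    uVal x t (insert k u) = uVal x t u := by
  rw [uVal, uVal, cohortN_insert_of_determined x t hk]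

theorem uVal_empty : uVal x t ∅ = 0 := by
  have hn : (n : ℝ) ≠ 0 := Nat.cast_ne_zero.mpr (Fin.pos t).ne'
  simp [uVal, cohortN, hn]

theorem uVal_eq_neg_logb_margP (u : Finset (Fin d)) :
    uVal x t u = -Real.logb 2 (margP x u fun j => x t j) := by
  simp only [uVal, margP, cohortN, Subtype.forall]

theorem card_filter_pattern_eq_mul_margP {u : Finset (Fin d)} (z : ∀ j : u, X j.1)
    (hn : n ≠ 0) : (#{t | (fun j : u => x t j) = z} : ℝ) = n * margP x u z := by
  rw [margP, mul_div_cancel₀ _ (by exact_mod_cast hn)]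
  simp only [funext_iff]

end Cohort

-- For `n = 0` both sides vanish: `margP` is then identically `0` because `x / 0 = 0`.
theorem inv_mul_sum_uVal (x : Fin n → ∀ j, X j) (u : Finset (Fin d)) :
    (n : ℝ)⁻¹ * ∑ t, uVal x t u = emEnt x u := by
  rcases eq_or_ne n 0 with rfl | hn
  · simp [emEnt, margP]
  simp_rw [uVal_eq_neg_logb_margP]
  rw [← sum_fiberwise' univ (fun t (j : u) => x t j) fun z => -Real.logb 2 (margP x u z)]
  simp only [sum_const, nsmul_eq_mul, card_filter_pattern_eq_mul_margP x _ hn, emEnt, mul_sum]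
  rw [← sum_neg_distrib]
  refine sum_congr rfl fun z _ => ?_
  field_simp

theorem uShap_one_of_fin_three {X : Fin 3 → Type} [∀ j, DecidableEq (X j)]
    (x : Fin n → ∀ j, X j) (t : Fin n) :
    uShap x t 1 = 3⁻¹ * (uVal x t {1} - uVal x t ∅)
      + 6⁻¹ * (uVal x t {0, 1} - uVal x t {0}) + 6⁻¹ * (uVal x t {1, 2} - uVal x t {2})
      + 3⁻¹ * (uVal x t {0, 1, 2} - uVal x t {0, 2}) := by
  have hcoalitions : ((univ : Finset (Fin 3)).erase 1).powerset = {∅, {0}, {2}, {0, 2}} := by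
    decide
  rw [uShap, hcoalitions, sum_insert (by decide), sum_insert (by decide),
    sum_insert (by decide), sum_singleton]
  have h01 : (insert 1 {0} : Finset (Fin 3)) = {0, 1} := by decide
  have h012 : (insert 1 {0, 2} : Finset (Fin 3)) = {0, 1, 2} := by decide
  simp only [h01, h012, insert_empty, card_empty, card_singleton,
    show ({0, 2} : Finset (Fin 3)).card = 2 by decide]
  norm_num
  ring

theorem globalUniquenessShapley_duplicate_var2_general
    (n : ℕ)
    (X : Fin 3 → Type) [∀ j, Fintype (X j)] [∀ j, DecidableEq (X j)]
    (hX : X 2 = X 0)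
    (x : Fin n → ∀ j, X j)
    (hdup : ∀ i, x i 2 = cast hX.symm (x i 0)) :
    uShapGlobal x 1
      = (1 / 3) * emEnt x {1} + (2 / 3) * (emEnt x {0, 1} - emEnt x {0}) := by
  have hagree : ∀ i t, x i 0 = x t 0 ↔ x i 2 = x t 2 := fun i t => by
    rw [hdup i, hdup t, cast_inj]
  have uVal_insert_zero : ∀ t u, 2 ∈ u → uVal x t (insert 0 u) = uVal x t u :=
    fun t _ hu => uVal_insert_of_determined x t fun i h => (hagree i t).mpr (h 2 hu)
  have uVal_insert_two : ∀ t u, 0 ∈ u → uVal x t (insert 2 u) = uVal x t u :=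
    fun t _ hu => uVal_insert_of_determined x t fun i h => (hagree i t).mp (h 0 hu)
  have hshap : ∀ t, uShap x t 1
      = 1 / 3 * uVal x t {1} + 2 / 3 * (uVal x t {0, 1} - uVal x t {0}) := fun t => by
    have h2 : uVal x t {2} = uVal x t {0} := by
      rw [← uVal_insert_zero t {2} (by simp), ← uVal_insert_two t {0} (by simp), pair_comm]
    have h12 : uVal x t {1, 2} = uVal x t {0, 1} := by
      rw [← uVal_insert_zero t {1, 2} (by simp), ← uVal_insert_two t {0, 1} (by simp)]
      congr 1
      decide
    rw [uShap_one_of_fin_three, uVal_empty, uVal_insert_zero t {2} (by simp),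
      uVal_insert_zero t {1, 2} (by simp), h2, h12]
    ring
  simp only [uShapGlobal, hshap, sum_add_distrib, sum_sub_distrib, ← mul_sum,
    ← inv_mul_sum_uVal x]
  ring

/-- with `d = 3` and variable `3` (index `2`) duplicating variable `1`
(index `0`), the global uniqueness Shapley value of variable `2` (index `1`) is
`(1/3)𝓗({2}) + (2/3)𝓗({2}|{1})`. -/
theorem globalUniquenessShapley_duplicate_var2
    (n : ℕ) (hn : 1 ≤ n)
    (X : Fin 3 → Type) [∀ j, Fintype (X j)] [∀ j, DecidableEq (X j)]
    (hX : X 2 = X 0)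
    (x : Fin n → ∀ j, X j)
    (hdup : ∀ i, x i 2 = cast hX.symm (x i 0)) :
    uShapGlobal x 1
      = (1 / 3) * emEnt x {1} + (2 / 3) * (emEnt x {0, 1} - emEnt x {0}) :=
  globalUniquenessShapley_duplicate_var2_general n X hX x hdup
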